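/- arXiv:2406.05846 — 3 statements merged into one kernel-verified Lean document; each statement's English description precedes it below -/
import Mathlib

section
/- Consider a multi-block SDP with data: a finite index set B of blocks with sizes n_β, symmetric matrices C_β ∈ S^{n_β} and A_{i,β} ∈ S^{n_β} for i ∈ [m], and b ∈ ℝ^m. Suppose X̂ = (X̂_β)_{β ∈ B} is a tuple of positive semidefinite matrices satisfying the linear constraints Σ_{β ∈ B} ⟨A_{i,β}, X̂_β⟩ = b_i for all i ∈ [m], and suppose tr(X̂_β) ≤ R_β for each β ∈ B with R_β ≥ 0. Then for every y ∈ ℝ^m: Σ_{β ∈ B} ⟨C_β, X̂_β⟩ ≥ ⟨b, y⟩ + Σ_{β ∈ B} R_β · min{ 0, λ_min( C_β − Σ_{i=1}^m y_i A_{i,β} ) }. -/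
/-!
With `S_β = C_β - ∑ i, y i • A i β`, symmetry of `X̂_β` gives
`⟨C_β, X̂_β⟩ = ⟨S_β, X̂_β⟩ + ∑ i, y i ⟨A_{i,β}, X̂_β⟩`, so summing over the blocks and using the
linear constraints, `∑ β, ⟨C_β, X̂_β⟩ = ⟨b, y⟩ + ∑ β, ⟨S_β, X̂_β⟩`. Diagonalising `S_β = U D Uᵀ`
turns `⟨S_β, X̂_β⟩` into `∑ j, λ_j (Uᵀ X̂_β U)_{jj}`, and the diagonal of the positive
semidefinite matrix `Uᵀ X̂_β U` is nonnegative with sum `tr X̂_β`; hence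
`⟨S_β, X̂_β⟩ ≥ c · tr X̂_β ≥ c · R_β` for `c = min 0 λ_min ≤ 0`.
-/

open Matrix

namespace Matrix

variable {n : Type*} [Fintype n]

theorem trace_transpose_mul_of_isHermitian (M : Matrix n n ℝ) {X : Matrix n n ℝ}
    (hX : X.IsHermitian) : (Mᵀ * X).trace = (M * X).trace := by
  conv_rhs => rw [← trace_transpose_mul, ← conjTranspose_eq_transpose_of_trivial X, hX.eq]

theorem trace_transpose_mul_eq_trace_sub_mul_add {ι : Type*} [Fintype ι] (C : Matrix n n ℝ)
    (A : ι → Matrix n n ℝ) (y : ι → ℝ) {X : Matrix n n ℝ} (hX : X.IsHermitian) :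
    (Cᵀ * X).trace = ((C - ∑ i, y i • A i) * X).trace + ∑ i, y i * ((A i)ᵀ * X).trace := by
  simp only [trace_transpose_mul_of_isHermitian _ hX, Matrix.sub_mul, trace_sub, Finset.sum_mul,
    trace_sum, Matrix.smul_mul, trace_smul, smul_eq_mul]
  ring

variable [DecidableEq n]

theorem IsHermitian.mul_trace_le_trace_mul {S X : Matrix n n ℝ} (hS : S.IsHermitian)
    (hX : X.PosSemidef) {c : ℝ} (hc : ∀ j, c ≤ hS.eigenvalues j) :
    c * X.trace ≤ (S * X).trace := by
  set U : Matrix n n ℝ := ↑hS.eigenvectorUnitary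
  have hUU : U * star U = 1 := Matrix.mem_unitaryGroup_iff.mp hS.eigenvectorUnitary.2
  have hY : (star U * X * U).PosSemidef := hX.conjTranspose_mul_mul_same U
  have htrX : X.trace = (star U * X * U).trace := by
    rw [trace_mul_cycle, hUU, one_mul]
  have htrSX : (S * X).trace = ∑ j, hS.eigenvalues j * (star U * X * U) j j := by
    conv_lhs => rw [hS.spectral_theorem, Unitary.conjStarAlgAut_apply]
    rw [Matrix.mul_assoc, Matrix.mul_assoc, trace_mul_comm]
    simp only [Matrix.mul_assoc, trace, diag_apply, diagonal_mul]
    rfl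
  rw [htrX, htrSX, trace, Finset.mul_sum]
  exact Finset.sum_le_sum fun j _ => mul_le_mul_of_nonneg_right (hc j) hY.diag_nonneg

theorem IsHermitian.mul_min_zero_iInf_eigenvalues_le_trace_mul {S X : Matrix n n ℝ}
    (hS : S.IsHermitian) (hX : X.PosSemidef) {R : ℝ} (hR : X.trace ≤ R) :
    R * min 0 (⨅ j, hS.eigenvalues j) ≤ (S * X).trace := by
  set c := min 0 (⨅ j, hS.eigenvalues j)
  have hc : ∀ j, c ≤ hS.eigenvalues j := fun j =>
    (min_le_right _ _).trans (ciInf_le (Set.finite_range _).bddBelow j)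
  calc R * c ≤ X.trace * c := mul_le_mul_of_nonpos_right hR (min_le_left _ _)
    _ = c * X.trace := mul_comm _ _
    _ ≤ (S * X).trace := hS.mul_trace_le_trace_mul hX hc

end Matrix

theorem stmt_3_general (B : Type*) [Fintype B] (n : B → ℕ) (m : ℕ)
    (C : ∀ β, Matrix (Fin (n β)) (Fin (n β)) ℝ)
    (A : Fin m → ∀ β, Matrix (Fin (n β)) (Fin (n β)) ℝ)
    (b : Fin m → ℝ) (R : B → ℝ)
    (Xh : ∀ β, Matrix (Fin (n β)) (Fin (n β)) ℝ)
    (hX : ∀ β, (Xh β).PosSemidef)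
    (hlin : ∀ i, ∑ β, ((A i β)ᵀ * Xh β).trace = b i)
    (htr : ∀ β, (Xh β).trace ≤ R β)
    (y : Fin m → ℝ)
    (hH : ∀ β, (C β - ∑ i, y i • A i β).IsHermitian) :
    ∑ β, ((C β)ᵀ * Xh β).trace ≥
      (∑ i, b i * y i) + ∑ β, R β * min 0 (⨅ j, (hH β).eigenvalues j) := by
  have hsplit : ∑ β, ((C β)ᵀ * Xh β).trace =
      ∑ β, ((C β - ∑ i, y i • A i β) * Xh β).trace + ∑ i, b i * y i := by
    rw [Finset.sum_congr rfl fun β _ =>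
      trace_transpose_mul_eq_trace_sub_mul_add (C β) (A · β) y (hX β).isHermitian,
      Finset.sum_add_distrib, Finset.sum_comm]
    simp only [← Finset.mul_sum, hlin, mul_comm]
  have hblock := fun β => (hH β).mul_min_zero_iInf_eigenvalues_le_trace_mul (hX β) (htr β)
  rw [hsplit, ge_iff_le, add_comm]
  exact add_le_add_left (Finset.sum_le_sum fun β _ => hblock β) _

/-- **Refined lower bound for a multi-block SDP.**
If the PSD tuple `X̂ = (X̂_β)` satisfies the linear constraints `Σ_β ⟨A_{i,β}, X̂_β⟩ = b_i`
and trace bounds `tr(X̂_β) ≤ R_β` with `R_β ≥ 0`, then for every `y ∈ ℝ^m`,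
`Σ_β ⟨C_β, X̂_β⟩ ≥ ⟨b, y⟩ + Σ_β R_β · min{0, λ_min(C_β − Σ_i y_i A_{i,β})}`. -/
theorem stmt_3 (B : Type*) [Fintype B] (n : B → ℕ) (m : ℕ)
    (C : ∀ β, Matrix (Fin (n β)) (Fin (n β)) ℝ)
    (A : Fin m → ∀ β, Matrix (Fin (n β)) (Fin (n β)) ℝ)
    (b : Fin m → ℝ) (R : B → ℝ)
    (Xh : ∀ β, Matrix (Fin (n β)) (Fin (n β)) ℝ)
    (hC : ∀ β, (C β).IsHermitian) (hA : ∀ i β, (A i β).IsHermitian)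
    (hX : ∀ β, (Xh β).PosSemidef)
    (hlin : ∀ i, ∑ β, ((A i β)ᵀ * Xh β).trace = b i)
    (hR : ∀ β, 0 ≤ R β) (htr : ∀ β, (Xh β).trace ≤ R β)
    (y : Fin m → ℝ)
    (hH : ∀ β, (C β - ∑ i, y i • A i β).IsHermitian) :
    ∑ β, ((C β)ᵀ * Xh β).trace ≥
      (∑ i, b i * y i) + ∑ β, R β * min 0 (⨅ j, (hH β).eigenvalues j) :=
  stmt_3_general B n m C A b R Xh hX hlin htr y hH
end

section
/- Let κ ≥ 1 and let v ∈ ℝ^{s(d,κ)} be a vector indexed by multi-indices α ∈ ℕ^d with |α| ≤ κ, satisfying v_0 = 1 and the Hankel consistency condition v_α · v_β = v_{α'} · v_{β'} whenever α + β = α' + β' (for |α|,|β|,|α'|,|β'| ≤ κ). Define z ∈ ℝ^d by z_i := v_{e_i} where e_i is the i-th standard basis multi-index. Then v_α = z^α for every |α| ≤ κ; that is, v = [z]_κ is the monomial vector of the point z. -/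
/-- **Hankel-consistent rank-one factors are monomial vectors.**
Let `v ∈ ℝ^{s(d,κ)}` (represented as a function on multi-indices `ℕ^d`, with all conditions
restricted to degrees `≤ κ`) satisfy `v_0 = 1` and the Hankel consistency condition
`v_α v_β = v_{α'} v_{β'}` whenever `α + β = α' + β'`.  Define `z_i := v_{e_i}`.  Then
`v_α = z^α` for every `|α| ≤ κ`, i.e. `v = [z]_κ`. -/
theorem stmt_9 (d κ : ℕ) (hκ : 1 ≤ κ) (v : (Fin d → ℕ) → ℝ)
    (h0 : v 0 = 1)
    (hH : ∀ α β α' β' : Fin d → ℕ, ∑ i, α i ≤ κ → ∑ i, β i ≤ κ →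
      ∑ i, α' i ≤ κ → ∑ i, β' i ≤ κ → α + β = α' + β' →
      v α * v β = v α' * v β') :
    ∀ α : Fin d → ℕ, ∑ i, α i ≤ κ →
      v α = ∏ i, v (Pi.single i 1) ^ α i := by
  have key : ∀ n : ℕ, ∀ α : Fin d → ℕ, ∑ i, α i = n → n ≤ κ →
      v α = ∏ i, v (Pi.single i 1) ^ α i := by
    intro n
    induction n with
    | zero =>
      intro α hsum _
      have hα : α = 0 := by
        funext i
        exact Finset.sum_eq_zero_iff.mp hsum i (Finset.mem_univ i)
      subst hα
      simp [h0]
    | succ n ih =>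
      intro α hsum hle
      have hpos : ∃ i, 0 < α i := by
        by_contra h
        push_neg at h
        have : ∑ i, α i = 0 := Finset.sum_eq_zero (fun i _ => Nat.le_zero.mp (h i))
        omega
      obtain ⟨i, hi⟩ := hpos
      set β : Fin d → ℕ := α - Pi.single i 1 with hβ
      have hαβ : α = β + Pi.single i 1 := by
        funext j
        by_cases hj : j = i
        · subst hj
          simp [hβ, Pi.single_eq_same]
          omega
        · simp [hβ, Pi.single_eq_of_ne hj]
      have hsingle : ∑ j, Pi.single i 1 j = 1 := by
        simp [Finset.sum_pi_single']
      have hβsum : ∑ j, β j = n := by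
        have := congrArg (fun f => ∑ j, f j) hαβ
        simp only [Finset.sum_add_distrib, Pi.add_apply] at this
        omega
      have h1 : v α * v 0 = v β * v (Pi.single i 1) := by
        apply hH
        · omega
        · simp
        · omega
        · omega
        · simp [hαβ]
      have hvα : v α = v β * v (Pi.single i 1) := by
        rw [h0, mul_one] at h1; exact h1
      rw [hvα, ih β hβsum (by omega)]
      conv_rhs => rw [hαβ]
      simp only [Pi.add_apply, pow_add, Finset.prod_mul_distrib]
      congr 1
      rw [Finset.prod_eq_single i (fun j _ hj => by simp [Pi.single_eq_of_ne hj])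
        (fun h => absurd (Finset.mem_univ i) h), Pi.single_eq_same, pow_one]
  intro α hα
  exact key (∑ i, α i) α rfl hα
end

section
/- Fix d, κ ∈ ℕ with κ ≥ 1 and R > 0. Let φ = (φ_α)_{|α| ≤ 2κ} be a real sequence indexed by multi-indices of degree at most 2κ, with φ_0 = 1, such that the moment matrix M(φ) = (φ_{α+β})_{|α|,|β|≤κ} is PSD, and for each i ∈ [d] the localizing matrix of the ball constraint g_i(z) := R² − z_i², namely ( R²·φ_{α+β} − φ_{α+β+2e_i} )_{|α|,|β| ≤ κ−1}, is PSD. Then the diagonal moments satisfy φ_{2β} ≤ max(1, R²)^{|β|} for all |β| ≤ κ, and every entry of the moment matrix satisfies |φ_{α+β}| ≤ max(1, R)^{2κ} for |α|, |β| ≤ κ. In particular, the feasible set of the order-κ moment relaxation of a polynomial optimization problem whose constraints include R² − z_i² ≥ 0 for every variable is bounded. -/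
/-!
The localizing matrix of `R² - z_i²` is PSD, so its diagonal gives
`φ_{2β + 2e_i} ≤ R² φ_{2β}`; peeling off one unit of `β` at a time yields
`φ_{2β} ≤ R^{2|β|}`. For the off-diagonal entries, the `2 × 2` principal minors of the PSD
moment matrix give `φ_{α+β}² ≤ φ_{2α} φ_{2β} ≤ R^{2(|α|+|β|)}`.
-/

open Finset

theorem Matrix.PosSemidef.apply_sq_le {R n : Type*} [CommRing R] [LinearOrder R]
    [IsStrictOrderedRing R] [StarRing R] [TrivialStar R] [Fintype n] [DecidableEq n]
    {M : Matrix n n R} (hM : M.PosSemidef) (i j : n) : M i j ^ 2 ≤ M i i * M j j := by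
  have hB := LinearMap.BilinForm.apply_mul_apply_le_of_forall_zero_le (Matrix.toLinearMap₂' R M)
    (fun x => by simpa [Matrix.toLinearMap₂'_apply'] using hM.dotProduct_mulVec_nonneg x)
    (Pi.single i 1) (Pi.single j 1)
  simp only [Matrix.toLinearMap₂'_apply', Matrix.mulVec_single_one, single_one_dotProduct,
    Matrix.col_apply] at hB
  have hji : M j i = M i j := by simpa using hM.isHermitian.apply i j
  rwa [hji, ← sq] at hB

theorem exists_eq_add_single_one {ι : Type*} [Fintype ι] [DecidableEq ι] {β : ι → ℕ}
    (h : ∑ i, β i ≠ 0) : ∃ i, ∃ β' : ι → ℕ, β = β' + Pi.single i 1 := by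
  obtain ⟨i, -, hi⟩ := exists_ne_zero_of_sum_ne_zero h
  refine ⟨i, β - Pi.single i 1, funext fun j => ?_⟩
  rcases eq_or_ne j i with rfl | hj
  · simp only [Pi.add_apply, Pi.sub_apply, Pi.single_eq_same]
    omega
  · simp [hj]

abbrev BoundedMultiIndex (d κ : ℕ) : Type :=
  {α : Fin d → Fin (κ + 1) // ∑ i, (α i : ℕ) ≤ κ}

def BoundedMultiIndex.ofSumLe {d κ : ℕ} (α : Fin d → ℕ) (hα : ∑ i, α i ≤ κ) :
    BoundedMultiIndex d κ :=
  ⟨fun i => ⟨α i, Nat.lt_succ_of_le ((single_le_sum (fun j _ => Nat.zero_le (α j))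
    (mem_univ i)).trans hα)⟩, hα⟩

section Moments

variable {d : ℕ} (φ : (Fin d → ℕ) → ℝ)

def momentMatrix (κ : ℕ) : Matrix (BoundedMultiIndex d κ) (BoundedMultiIndex d κ) ℝ :=
  Matrix.of fun a b => φ fun i => (a.1 i : ℕ) + (b.1 i : ℕ)

def ballLocalizingMatrix (R : ℝ) (i₀ : Fin d) (m : ℕ) :
    Matrix (BoundedMultiIndex d m) (BoundedMultiIndex d m) ℝ :=
  Matrix.of fun a b =>
    R ^ 2 * φ (fun i => (a.1 i : ℕ) + (b.1 i : ℕ)) -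
      φ ((fun i => (a.1 i : ℕ) + (b.1 i : ℕ)) + Pi.single i₀ 2)

variable {φ} {κ : ℕ} {α β : Fin d → ℕ}

theorem moment_add_self_nonneg (hM : (momentMatrix φ κ).PosSemidef) (hα : ∑ i, α i ≤ κ) :
    0 ≤ φ (α + α) :=
  hM.diag_nonneg (i := .ofSumLe α hα)

theorem moment_add_sq_le (hM : (momentMatrix φ κ).PosSemidef) (hα : ∑ i, α i ≤ κ)
    (hβ : ∑ i, β i ≤ κ) : φ (α + β) ^ 2 ≤ φ (α + α) * φ (β + β) :=
  hM.apply_sq_le (.ofSumLe α hα) (.ofSumLe β hβ)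

theorem moment_add_self_add_single_le {R : ℝ} {i₀ : Fin d} {m : ℕ}
    (hL : (ballLocalizingMatrix φ R i₀ m).PosSemidef) (hβ : ∑ i, β i ≤ m) :
    φ (β + β + Pi.single i₀ 2) ≤ R ^ 2 * φ (β + β) :=
  sub_nonneg.mp (hL.diag_nonneg (i := .ofSumLe β hβ))

theorem moment_add_self_le {R : ℝ} (h0 : φ 0 = 1)
    (hL : ∀ i₀, (ballLocalizingMatrix φ R i₀ (κ - 1)).PosSemidef) (hβ : ∑ i, β i ≤ κ) :
    φ (β + β) ≤ (R ^ 2) ^ ∑ i, β i := by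
  induction hn : ∑ i, β i generalizing β with
  | zero =>
    have hβ0 : β = 0 := funext fun i => sum_eq_zero_iff.mp hn i (mem_univ i)
    simp [hβ0, h0]
  | succ n ih =>
    obtain ⟨i₀, β', rfl⟩ := exists_eq_add_single_one (hn.trans_ne n.succ_ne_zero)
    have hdeg : ∑ i, β' i = n := by
      simpa [sum_add_distrib] using hn
    calc φ (β' + Pi.single i₀ 1 + (β' + Pi.single i₀ 1))
        = φ (β' + β' + Pi.single i₀ 2) := by
          rw [add_add_add_comm, ← Pi.single_add]
      _ ≤ R ^ 2 * φ (β' + β') := moment_add_self_add_single_le (hL i₀) (by omega)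
      _ ≤ R ^ 2 * (R ^ 2) ^ n := by
          gcongr
          exact ih (by omega) hdeg
      _ = (R ^ 2) ^ (n + 1) := (pow_succ' _ _).symm

theorem abs_moment_add_le {R : ℝ} (hR : 0 ≤ R) (h0 : φ 0 = 1)
    (hM : (momentMatrix φ κ).PosSemidef)
    (hL : ∀ i₀, (ballLocalizingMatrix φ R i₀ (κ - 1)).PosSemidef)
    (hα : ∑ i, α i ≤ κ) (hβ : ∑ i, β i ≤ κ) :
    |φ (α + β)| ≤ R ^ (∑ i, α i + ∑ i, β i) := by
  refine abs_le_of_sq_le_sq ?_ (by positivity)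
  calc φ (α + β) ^ 2 ≤ φ (α + α) * φ (β + β) := moment_add_sq_le hM hα hβ
    _ ≤ (R ^ 2) ^ (∑ i, α i) * (R ^ 2) ^ (∑ i, β i) :=
        mul_le_mul (moment_add_self_le h0 hL hα) (moment_add_self_le h0 hL hβ)
          (moment_add_self_nonneg hM hβ) (by positivity)
    _ = (R ^ (∑ i, α i + ∑ i, β i)) ^ 2 := by ring

end Moments

theorem stmt_15_general (d κ : ℕ) (R : ℝ) (hR : 0 < R)
    (φ : (Fin d → ℕ) → ℝ) (h0 : φ 0 = 1)
    (hM : Matrix.PosSemidef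
      (Matrix.of fun a b : {α : Fin d → Fin (κ + 1) // ∑ i, (α i : ℕ) ≤ κ} =>
        φ fun i => (a.1 i : ℕ) + (b.1 i : ℕ)))
    (hL : ∀ i0 : Fin d, Matrix.PosSemidef
      (Matrix.of fun a b : {α : Fin d → Fin (κ - 1 + 1) // ∑ i, (α i : ℕ) ≤ κ - 1} =>
        R ^ 2 * φ (fun i => (a.1 i : ℕ) + (b.1 i : ℕ)) -
          φ ((fun i => (a.1 i : ℕ) + (b.1 i : ℕ)) + Pi.single i0 2))) :
    (∀ β : Fin d → ℕ, ∑ i, β i ≤ κ →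
      φ (fun i => 2 * β i) ≤ max 1 (R ^ 2) ^ (∑ i, β i)) ∧
    ∀ α β : Fin d → ℕ, ∑ i, α i ≤ κ → ∑ i, β i ≤ κ →
      |φ (α + β)| ≤ max 1 R ^ (2 * κ) := by
  refine ⟨fun β hβ => ?_, fun α β hα hβ => ?_⟩
  · rw [show (fun i => 2 * β i) = β + β from funext fun i => two_mul (β i)]
    exact (moment_add_self_le (φ := φ) h0 hL hβ).trans
      (pow_le_pow_left₀ (sq_nonneg R) (le_max_right _ _) _)
  · calc |φ (α + β)| ≤ R ^ (∑ i, α i + ∑ i, β i) := abs_moment_add_le hR.le h0 hM hL hα hβ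
      _ ≤ max 1 R ^ (∑ i, α i + ∑ i, β i) := pow_le_pow_left₀ hR.le (le_max_right _ _) _
      _ ≤ max 1 R ^ (2 * κ) := pow_le_pow_right₀ (le_max_left _ _) (by omega)

/-- **Ball constraints bound the moments.**
Let `φ` be a truncated moment sequence (represented as a function on multi-indices) with
`φ_0 = 1`, PSD order-`κ` moment matrix `(φ_{α+β})_{|α|,|β|≤κ}`, and, for each variable
`z_i`, PSD localizing matrix `(R²·φ_{α+β} − φ_{α+β+2e_i})_{|α|,|β|≤κ−1}` of the ball
constraint `R² − z_i² ≥ 0`.  Then the diagonal moments satisfy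
`φ_{2β} ≤ max(1, R²)^{|β|}` for `|β| ≤ κ`, and every entry of the moment matrix satisfies
`|φ_{α+β}| ≤ max(1, R)^{2κ}` for `|α|, |β| ≤ κ`. -/
theorem stmt_15 (d κ : ℕ) (hκ : 1 ≤ κ) (R : ℝ) (hR : 0 < R)
    (φ : (Fin d → ℕ) → ℝ) (h0 : φ 0 = 1)
    (hM : Matrix.PosSemidef
      (Matrix.of fun a b : {α : Fin d → Fin (κ + 1) // ∑ i, (α i : ℕ) ≤ κ} =>
        φ fun i => (a.1 i : ℕ) + (b.1 i : ℕ)))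
    (hL : ∀ i0 : Fin d, Matrix.PosSemidef
      (Matrix.of fun a b : {α : Fin d → Fin (κ - 1 + 1) // ∑ i, (α i : ℕ) ≤ κ - 1} =>
        R ^ 2 * φ (fun i => (a.1 i : ℕ) + (b.1 i : ℕ)) -
          φ ((fun i => (a.1 i : ℕ) + (b.1 i : ℕ)) + Pi.single i0 2))) :
    (∀ β : Fin d → ℕ, ∑ i, β i ≤ κ →
      φ (fun i => 2 * β i) ≤ max 1 (R ^ 2) ^ (∑ i, β i)) ∧
    ∀ α β : Fin d → ℕ, ∑ i, α i ≤ κ → ∑ i, β i ≤ κ →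
      |φ (α + β)| ≤ max 1 R ^ (2 * κ) :=
  stmt_15_general d κ R hR φ h0 hM hL
end
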